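/- Let K⁺ and K⁻ be entrywise-nonnegative real ℓ×(m+m') matrices, b ∈ ℝ^ℓ, and let W = {w ∈ ℝ^{m+m'} : K⁺w⁺ + K⁻w⁻ ≤ b componentwise}. Let Φ : ℝ^m → ℝ be continuous and monotone nondecreasing with respect to the componentwise order (u ≤ v componentwise implies Φ(u) ≤ Φ(v)), and let E' ∈ ℝ with Φ(0) ≤ E'. Suppose w = (w₁, w₂) ∈ W, with w₁ ∈ ℝ^m the coordinates indexed by the first block and w₂ ∈ ℝ^{m'} the remaining coordinates, satisfies Φ(w₁) = E'. Then there exists w̆₁ ∈ ℝ^m with w̆₁ ≥ 0 componentwise, (w̆₁, w₂) ∈ W, and Φ(w̆₁) = E'. -/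

import Mathlib

open Matrix Set

/-- Componentwise positive part of a vector. -/
def vecPos {ι : Type*} (w : ι → ℝ) : ι → ℝ := fun i => max (w i) 0

/-- Componentwise negative part of a vector. -/
def vecNeg {ι : Type*} (w : ι → ℝ) : ι → ℝ := fun i => max (-(w i)) 0

/-!
Replacing `w₁` by `κ • w₁⁺` with `0 ≤ κ ≤ 1` only shrinks both the positive and the negative
part of the scenario, so by nonnegativity of `K⁺` and `K⁻` it stays in `W`. Since `Φ` is
monotone, `Φ(0) ≤ E' = Φ(w₁) ≤ Φ(w₁⁺)`, and the intermediate value theorem along the segment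
`κ ↦ κ • w₁⁺` provides a `κ` with `Φ(κ • w₁⁺) = E'`.
-/

section PosNegParts

variable {α β : Type*}

lemma le_vecPos (w : α → ℝ) : w ≤ vecPos w := fun _ => le_max_left _ _

lemma vecPos_nonneg (w : α → ℝ) : 0 ≤ vecPos w := fun _ => le_max_right _ _

lemma vecNeg_nonneg (w : α → ℝ) : 0 ≤ vecNeg w := fun _ => le_max_right _ _

lemma vecPos_eq_self {w : α → ℝ} (hw : 0 ≤ w) : vecPos w = w :=
  funext fun i => max_eq_left (hw i)

lemma vecNeg_eq_zero {w : α → ℝ} (hw : 0 ≤ w) : vecNeg w = 0 :=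
  funext fun i => max_eq_right (neg_nonpos.2 (hw i))

lemma vecPos_sumElim (u : α → ℝ) (v : β → ℝ) :
    vecPos (Sum.elim u v) = Sum.elim (vecPos u) (vecPos v) := by
  ext (i | i) <;> rfl

lemma vecNeg_sumElim (u : α → ℝ) (v : β → ℝ) :
    vecNeg (Sum.elim u v) = Sum.elim (vecNeg u) (vecNeg v) := by
  ext (i | i) <;> rfl

end PosNegParts

lemma Matrix.mulVec_mono_of_nonneg {R ι κ : Type*} [Semiring R] [PartialOrder R]
    [IsOrderedRing R] [Fintype κ] {K : Matrix ι κ R} (hK : ∀ i j, 0 ≤ K i j) {u v : κ → R}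
    (huv : u ≤ v) : K *ᵥ u ≤ K *ᵥ v :=
  fun i => dotProduct_le_dotProduct_of_nonneg_left huv (hK i)

section Concentration

variable {ι κ : Type*} [Fintype κ] {Kp Kn : Matrix ι κ ℝ}

lemma concentration_le_of_vecPos_le_of_vecNeg_le (hKp : ∀ i j, 0 ≤ Kp i j)
    (hKn : ∀ i j, 0 ≤ Kn i j) {v w : κ → ℝ} (hpos : vecPos v ≤ vecPos w)
    (hneg : vecNeg v ≤ vecNeg w) :
    Kp *ᵥ vecPos v + Kn *ᵥ vecNeg v ≤ Kp *ᵥ vecPos w + Kn *ᵥ vecNeg w :=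
  add_le_add (mulVec_mono_of_nonneg hKp hpos) (mulVec_mono_of_nonneg hKn hneg)

lemma concentration_sumElim_le_of_nonneg_of_le_vecPos {α β : Type*} [Fintype α] [Fintype β]
    {Kp Kn : Matrix ι (α ⊕ β) ℝ} (hKp : ∀ i j, 0 ≤ Kp i j) (hKn : ∀ i j, 0 ≤ Kn i j)
    {x w₁ : α → ℝ} (w₂ : β → ℝ) (hx₀ : 0 ≤ x) (hx : x ≤ vecPos w₁) :
    Kp *ᵥ vecPos (Sum.elim x w₂) + Kn *ᵥ vecNeg (Sum.elim x w₂) ≤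
      Kp *ᵥ vecPos (Sum.elim w₁ w₂) + Kn *ᵥ vecNeg (Sum.elim w₁ w₂) := by
  apply concentration_le_of_vecPos_le_of_vecNeg_le hKp hKn
  · rw [vecPos_sumElim, vecPos_sumElim, vecPos_eq_self hx₀]
    exact Sum.elim_le_elim_iff.2 ⟨hx, le_rfl⟩
  · rw [vecNeg_sumElim, vecNeg_sumElim, vecNeg_eq_zero hx₀]
    exact Sum.elim_le_elim_iff.2 ⟨vecNeg_nonneg w₁, le_rfl⟩

end Concentration

lemma exists_mem_Icc_apply_smul_eq {E δ : Type*} [AddCommMonoid E] [Module ℝ E]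
    [TopologicalSpace E] [ContinuousSMul ℝ E] [LinearOrder δ] [TopologicalSpace δ]
    [OrderClosedTopology δ] {Φ : E → δ} (hΦ : Continuous Φ) {p : E} {c : δ}
    (h₀ : Φ 0 ≤ c) (h₁ : c ≤ Φ p) : ∃ κ ∈ Icc (0 : ℝ) 1, Φ (κ • p) = c :=
  intermediate_value_Icc zero_le_one (hΦ.comp (continuous_id.smul continuous_const)).continuousOn
    ⟨by simpa using h₀, by simpa using h₁⟩

/-- Lemma 2 (charging case): if `Φ` is continuous and monotone nondecreasing with
`Φ(0) ≤ E'`, and `(w₁, w₂)` belongs to the concentration model `W` with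
`Φ(w₁) = E'`, then there is a componentwise nonnegative `w̆₁` with
`(w̆₁, w₂) ∈ W` and `Φ(w̆₁) = E'`. -/
theorem sign_consistent_scenario_nonneg {ℓ m m' : ℕ}
    (Kp Kn : Matrix (Fin ℓ) (Fin m ⊕ Fin m') ℝ)
    (hKp : ∀ i j, 0 ≤ Kp i j) (hKn : ∀ i j, 0 ≤ Kn i j)
    (b : Fin ℓ → ℝ)
    (W : Set (Fin m ⊕ Fin m' → ℝ))
    (hW : W = {w | ∀ i, (Kp *ᵥ vecPos w + Kn *ᵥ vecNeg w) i ≤ b i})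
    (Φ : (Fin m → ℝ) → ℝ) (hcont : Continuous Φ)
    (hmono : ∀ u v : Fin m → ℝ, (∀ i, u i ≤ v i) → Φ u ≤ Φ v)
    (E' : ℝ) (hE : Φ 0 ≤ E')
    (w₁ : Fin m → ℝ) (w₂ : Fin m' → ℝ)
    (hmem : Sum.elim w₁ w₂ ∈ W) (hΦ : Φ w₁ = E') :
    ∃ w₁' : Fin m → ℝ, (∀ i, 0 ≤ w₁' i) ∧ Sum.elim w₁' w₂ ∈ W ∧ Φ w₁' = E' := by
  subst hW
  have hE_le : E' ≤ Φ (vecPos w₁) := hΦ ▸ hmono _ _ (le_vecPos w₁)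
  obtain ⟨κ, ⟨hκ₀, hκ₁⟩, hκ⟩ := exists_mem_Icc_apply_smul_eq hcont hE hE_le
  have hx₀ : 0 ≤ κ • vecPos w₁ := smul_nonneg hκ₀ (vecPos_nonneg w₁)
  have hx : κ • vecPos w₁ ≤ vecPos w₁ := smul_le_of_le_one_left (vecPos_nonneg w₁) hκ₁
  refine ⟨κ • vecPos w₁, hx₀, fun i => ?_, hκ⟩
  exact (concentration_sumElim_le_of_nonneg_of_le_vecPos hKp hKn w₂ hx₀ hx i).trans (hmem i)
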